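/- arXiv:math/0606167 — 8 statements merged into one kernel-verified Lean document; each statement's English description precedes it below -/
import Mathlib

section
/- Let f : ℝ → ℝ be twice differentiable with f'' concave on an interval I. Then for all y ∈ I and δ ≥ 0 with y+δ, y−δ ∈ I, f(y+δ) + f(y−δ) ≤ 2f(y) + f''(y)·δ². -/
/-!
Put `φ t = f (y + t) + f (y - t)`. Then `φ' t = f' (y + t) - f' (y - t)`, whose derivative
`f'' (y + t) + f'' (y - t)` is at most `2 f'' y` by concavity of `f''`. Two comparison arguments
on `[0, δ]` give `φ' t ≤ 2 f'' y t` and then `φ δ ≤ φ 0 + f'' y δ²`.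
-/

open Set

lemma image_le_of_hasDerivAt_le_hasDerivAt {g g' B B' : ℝ → ℝ} {δ : ℝ}
    (hg : ∀ t ∈ Icc 0 δ, HasDerivAt g (g' t) t) (hB : ∀ t, HasDerivAt B (B' t) t)
    (h0 : g 0 ≤ B 0) (hle : ∀ t ∈ Icc 0 δ, g' t ≤ B' t) (hδ : 0 ≤ δ) : g δ ≤ B δ :=
  image_le_of_deriv_right_le_deriv_boundary
    (fun t ht => (hg t ht).continuousAt.continuousWithinAt)
    (fun t ht => (hg t (Ico_subset_Icc_self ht)).hasDerivWithinAt) h0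
    (fun t _ => (hB t).continuousAt.continuousWithinAt) (fun t _ => (hB t).hasDerivWithinAt)
    (fun t ht => hle t (Ico_subset_Icc_self ht)) (right_mem_Icc.2 hδ)

section SymmetricDifferences

variable {f f' : ℝ → ℝ} {y δ : ℝ}

lemma add_mem_Icc_and_sub_mem_Icc {t : ℝ} (ht : t ∈ Icc 0 δ) :
    y + t ∈ Icc (y - δ) (y + δ) ∧ y - t ∈ Icc (y - δ) (y + δ) := by
  obtain ⟨ht0, htδ⟩ := ht
  exact ⟨⟨by linarith, by linarith⟩, ⟨by linarith, by linarith⟩⟩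

lemma hasDerivAt_comp_add_add_comp_sub (hf : ∀ x ∈ Icc (y - δ) (y + δ), HasDerivAt f (f' x) x)
    {t : ℝ} (ht : t ∈ Icc 0 δ) :
    HasDerivAt (fun t => f (y + t) + f (y - t)) (f' (y + t) - f' (y - t)) t := by
  obtain ⟨hp, hm⟩ := add_mem_Icc_and_sub_mem_Icc ht
  exact (((hf _ hp).comp_const_add y t).add ((hf _ hm).comp_const_sub y t)).congr_deriv
    (sub_eq_add_neg _ _).symm

lemma hasDerivAt_comp_add_sub_comp_sub (hf : ∀ x ∈ Icc (y - δ) (y + δ), HasDerivAt f (f' x) x)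
    {t : ℝ} (ht : t ∈ Icc 0 δ) :
    HasDerivAt (fun t => f (y + t) - f (y - t)) (f' (y + t) + f' (y - t)) t := by
  obtain ⟨hp, hm⟩ := add_mem_Icc_and_sub_mem_Icc ht
  exact (((hf _ hp).comp_const_add y t).sub ((hf _ hm).comp_const_sub y t)).congr_deriv
    (sub_neg_eq_add _ _)

lemma comp_add_sub_comp_sub_le (hf : ∀ x ∈ Icc (y - δ) (y + δ), HasDerivAt f (f' x) x)
    {M : ℝ} (hle : ∀ t ∈ Icc 0 δ, f' (y + t) + f' (y - t) ≤ 2 * M) (hδ : 0 ≤ δ) :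
    f (y + δ) - f (y - δ) ≤ 2 * M * δ :=
  image_le_of_hasDerivAt_le_hasDerivAt (fun t ht => hasDerivAt_comp_add_sub_comp_sub hf ht)
    (fun t => (hasDerivAt_id t).const_mul (2 * M)) (by simp) (by simpa using hle) hδ

lemma comp_add_add_comp_sub_le (hf : ∀ x ∈ Icc (y - δ) (y + δ), HasDerivAt f (f' x) x)
    {M : ℝ} (hle : ∀ t ∈ Icc 0 δ, f' (y + t) - f' (y - t) ≤ 2 * M * t) (hδ : 0 ≤ δ) :
    f (y + δ) + f (y - δ) ≤ 2 * f y + M * δ ^ 2 := by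
  have hB (t : ℝ) : HasDerivAt (fun t => 2 * f y + M * t ^ 2) (2 * M * t) t :=
    (((hasDerivAt_pow 2 t).const_mul M).const_add (2 * f y)).congr_deriv (by ring)
  exact image_le_of_hasDerivAt_le_hasDerivAt (fun t ht => hasDerivAt_comp_add_add_comp_sub hf ht)
    hB (by simp [two_mul]) hle hδ

end SymmetricDifferences

lemma comp_add_add_comp_sub_le_of_second_deriv {f f' f'' : ℝ → ℝ} {y δ M : ℝ}
    (hf : ∀ x ∈ Icc (y - δ) (y + δ), HasDerivAt f (f' x) x)
    (hf' : ∀ x ∈ Icc (y - δ) (y + δ), HasDerivAt f' (f'' x) x)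
    (hle : ∀ t ∈ Icc 0 δ, f'' (y + t) + f'' (y - t) ≤ 2 * M) (hδ : 0 ≤ δ) :
    f (y + δ) + f (y - δ) ≤ 2 * f y + M * δ ^ 2 := by
  refine comp_add_add_comp_sub_le hf (fun t ht => ?_) hδ
  have hsub : Icc (y - t) (y + t) ⊆ Icc (y - δ) (y + δ) :=
    Icc_subset_Icc (by linarith [ht.2]) (by linarith [ht.2])
  exact comp_add_sub_comp_sub_le (fun x hx => hf' x (hsub hx))
    (fun s hs => hle s ⟨hs.1, hs.2.trans ht.2⟩) ht.1

lemma ConcaveOn.add_add_sub_le_two_mul {s : Set ℝ} {g : ℝ → ℝ} (hg : ConcaveOn ℝ s g)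
    {y t : ℝ} (hp : y + t ∈ s) (hm : y - t ∈ s) : g (y + t) + g (y - t) ≤ 2 * g y := by
  have half : (0 : ℝ) ≤ 1 / 2 := by norm_num
  have hmid := hg.2 hp hm half half (by norm_num)
  simp only [smul_eq_mul] at hmid
  rw [show 1 / 2 * (y + t) + 1 / 2 * (y - t) = y by ring] at hmid
  linarith

theorem second_deriv_concave_bound_general (I : Set ℝ) (f f' f'' : ℝ → ℝ)
    (hderiv : ∀ x ∈ I, HasDerivAt f (f' x) x)
    (hderiv2 : ∀ x ∈ I, HasDerivAt f' (f'' x) x)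
    (hconc : ConcaveOn ℝ I f'')
    (y δ : ℝ) (hδ : 0 ≤ δ) (hyp : y + δ ∈ I) (hym : y - δ ∈ I) :
    f (y + δ) + f (y - δ) ≤ 2 * f y + f'' y * δ ^ 2 := by
  have hI : Icc (y - δ) (y + δ) ⊆ I := hconc.1.ordConnected.out hym hyp
  refine comp_add_add_comp_sub_le_of_second_deriv (fun x hx => hderiv x (hI hx))
    (fun x hx => hderiv2 x (hI hx)) (fun t ht => ?_) hδ
  obtain ⟨hp, hm⟩ := add_mem_Icc_and_sub_mem_Icc (y := y) ht
  exact hconc.add_add_sub_le_two_mul (hI hp) (hI hm)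

theorem second_deriv_concave_bound (I : Set ℝ) (f f' f'' : ℝ → ℝ)
    (hderiv : ∀ x ∈ I, HasDerivAt f (f' x) x)
    (hderiv2 : ∀ x ∈ I, HasDerivAt f' (f'' x) x)
    (hconc : ConcaveOn ℝ I f'')
    (y δ : ℝ) (hy : y ∈ I) (hδ : 0 ≤ δ) (hyp : y + δ ∈ I) (hym : y - δ ∈ I) :
    f (y + δ) + f (y - δ) ≤ 2 * f y + f'' y * δ ^ 2 :=
  second_deriv_concave_bound_general I f f' f'' hderiv hderiv2 hconc y δ hδ hyp hym
end

section
/- Let f : [0,1] → ℝ be concave and let g, ĝ : [0,1] → [0,1] be non-increasing functions such that ∫₀¹ g(u)du = ∫₀¹ ĝ(u)du and for all t ∈ [0,1], ∫₀ᵗ g(u)du ≥ ∫₀ᵗ ĝ(u)du. Then ∫₀¹ f(g(u))du ≤ ∫₀¹ f(ĝ(u))du. -/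
/-!
Write `h = g - ĝ` and `φ(u)` for the slope of `f` between `ĝ(u)` and `g(u)`, so that
`f ∘ g - f ∘ ĝ = h φ`. Both points move to the left as `u` grows, so by concavity `φ` is
non-decreasing wherever `h ≠ 0`, while `H(t) = ∫₀ᵗ h ≥ 0` with `H(1) = 0`. An Abel summation
then gives `∫ h φ ≤ 0`: for bounded monotone `φ` this is the layer-cake formula, since each
superlevel set of `φ` is a final segment `(c, 1]` on which `∫ h = -H(c) ≤ 0`; the general case
follows by truncating `φ` and dominated convergence.
-/

open Set MeasureTheory Filter Function

section Slope

variable {𝕜 : Type*} [Field 𝕜] [LinearOrder 𝕜] [IsStrictOrderedRing 𝕜] {s : Set 𝕜} {f : 𝕜 → 𝕜}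
  (hf : ConcaveOn 𝕜 s f)
include hf

theorem ConcaveOn.slope_le_slope_of_le {p q p' q' : 𝕜}
    (hp : p ∈ s) (hq : q ∈ s) (hp' : p' ∈ s) (hq' : q' ∈ s)
    (hpp' : p' ≤ p) (hqq' : q' ≤ q) (hpq : p ≠ q) (hpq' : p' ≠ q') :
    slope f p q ≤ slope f p' q' := by
  by_cases hp'q : p' = q
  · subst hp'q
    have hq'p : q' ≠ p := fun h => hpq (le_antisymm (h ▸ hqq') hpp')
    calc slope f p p' ≤ slope f p q' := hf.slope_anti hp ⟨hq', hq'p⟩ ⟨hq, hpq.symm⟩ hqq'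
      _ = slope f q' p := slope_comm f p q'
      _ ≤ slope f q' p' := hf.slope_anti hq' ⟨hp', hpq'⟩ ⟨hp, hq'p.symm⟩ hpp'
      _ = slope f p' q' := slope_comm f q' p'
  · calc slope f p q = slope f q p := slope_comm f p q
      _ ≤ slope f q p' := hf.slope_anti hq ⟨hp', hp'q⟩ ⟨hp, hpq⟩ hpp'
      _ = slope f p' q := slope_comm f q p'
      _ ≤ slope f p' q' := hf.slope_anti hp' ⟨hq', hpq'.symm⟩ ⟨hq, Ne.symm hp'q⟩ hqq'

theorem ConcaveOn.monotoneOn_slope_of_antitoneOn {t : Set 𝕜} {g g' : 𝕜 → 𝕜}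
    (hg : AntitoneOn g t) (hg' : AntitoneOn g' t) (hgs : MapsTo g t s) (hg's : MapsTo g' t s) :
    MonotoneOn (fun u => slope f (g' u) (g u)) (t ∩ support fun u => g u - g' u) :=
  fun _ ⟨hu, hgu⟩ _ ⟨hv, hgv⟩ huv => hf.slope_le_slope_of_le (hg's hu) (hgs hu) (hg's hv) (hgs hv)
    (hg' hu hv huv) (hg hu hv huv) (sub_ne_zero.1 hgu).symm (sub_ne_zero.1 hgv).symm

end Slope

theorem ConcaveOn.exists_bound_on_Icc {a b : ℝ} {f : ℝ → ℝ} (hf : ConcaveOn ℝ (Icc a b) f) :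
    ∃ C, ∀ x ∈ Icc a b, ‖f x‖ ≤ C := by
  refine ⟨max |min (f a) (f b)| |2 * f ((a + b) / 2) - min (f a) (f b)|, fun x hx => ?_⟩
  have hlower : ∀ y ∈ Icc a b, min (f a) (f b) ≤ f y := fun y hy =>
    hf.min_le_of_mem_Icc (left_mem_Icc.2 (hy.1.trans hy.2)) (right_mem_Icc.2 (hy.1.trans hy.2)) hy
  have hx' : a + b - x ∈ Icc a b := ⟨by linarith [hx.2], by linarith [hx.1]⟩
  have hmid := hf.2 hx hx' (by norm_num : (0:ℝ) ≤ 1 / 2) (by norm_num : (0:ℝ) ≤ 1 / 2) (by norm_num)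
  simp only [smul_eq_mul] at hmid
  rw [show 1 / 2 * x + 1 / 2 * (a + b - x) = (a + b) / 2 by ring] at hmid
  exact abs_le_max_abs_abs (hlower x hx) (by linarith [hlower _ hx'])

theorem QuasiconcaveOn.aemeasurable_comp_antitoneOn {s t : Set ℝ} {f g : ℝ → ℝ} {μ : Measure ℝ}
    (hf : QuasiconcaveOn ℝ s f) (hg : AntitoneOn g t) (hgt : MapsTo g t s) (ht : MeasurableSet t) :
    AEMeasurable (f ∘ g) (μ.restrict t) := by
  refine aemeasurable_restrict_of_measurable_subtype ht (measurable_of_Ici fun r => ?_)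
  have hanti : Antitone (g ∘ (↑) : t → ℝ) := fun x y hxy => hg x.2 y.2 hxy
  have : (fun x : t => (f ∘ g) x) ⁻¹' Ici r = (g ∘ (↑)) ⁻¹' {y ∈ s | r ≤ f y} := by
    ext x; simp [hgt x.2]
  rw [this]
  exact (((hf r).ordConnected).preimage_anti hanti).measurableSet

theorem ConcaveOn.intervalIntegrable_comp_antitoneOn {a b c d : ℝ} {f g : ℝ → ℝ}
    (hf : ConcaveOn ℝ (Icc a b) f) (hg : AntitoneOn g (uIcc c d))
    (hgab : MapsTo g (uIcc c d) (Icc a b)) :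
    IntervalIntegrable (f ∘ g) volume c d := by
  obtain ⟨C, hC⟩ := hf.exists_bound_on_Icc
  have : IsFiniteMeasure (volume.restrict (uIcc c d)) := Real.isFiniteMeasure_restrict_Icc _ _
  refine IntegrableOn.intervalIntegrable (Integrable.of_bound ?_ C ?_)
  · exact (hf.quasiconcaveOn.aemeasurable_comp_antitoneOn hg hgab
      measurableSet_uIcc).aestronglyMeasurable
  · exact (ae_restrict_iff' measurableSet_uIcc).2 (ae_of_all _ fun u hu => hC _ (hgab hu))

theorem IsUpperSet.exists_Ioc_subset_Ioc_inter_subset_Icc {T : Set ℝ} (hT : IsUpperSet T)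
    {a b : ℝ} (hab : a ≤ b) : ∃ c ∈ Icc a b, Ioc c b ⊆ Ioc a b ∩ T ∧ Ioc a b ∩ T ⊆ Icc c b := by
  set S := insert b (Ioc a b ∩ T)
  have hS : BddBelow S := ⟨a, by rintro x (rfl | ⟨⟨hx, -⟩, -⟩) <;> linarith⟩
  refine ⟨sInf S, ⟨le_csInf (insert_nonempty _ _) ?_, csInf_le hS (mem_insert _ _)⟩, ?_, ?_⟩
  · rintro x (rfl | ⟨⟨hx, -⟩, -⟩) <;> linarith
  · intro u ⟨hcu, hub⟩
    obtain ⟨x, hxS, hxu⟩ := exists_lt_of_csInf_lt (insert_nonempty _ _) hcu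
    rcases hxS with rfl | ⟨⟨hax, -⟩, hxT⟩
    · exact absurd hub hxu.not_ge
    · exact ⟨⟨hax.trans hxu, hub⟩, hT hxu.le hxT⟩
  · exact fun u hu => ⟨csInf_le hS (mem_insert_of_mem _ hu), hu.1.2⟩

section AbelSummation

variable {a b : ℝ} {h : ℝ → ℝ} (hab : a ≤ b) (hh : IntegrableOn h (Ioc a b))
  (hH : ∀ t ∈ Icc a b, 0 ≤ ∫ u in Ioc a t, h u) (hHb : ∫ u in Ioc a b, h u = 0)
include hab hh hH hHb

theorem setIntegral_inter_nonpos_of_isUpperSet {T : Set ℝ} (hT : IsUpperSet T) :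
    ∫ u in Ioc a b ∩ T, h u ≤ 0 := by
  obtain ⟨c, ⟨hac, hcb⟩, hsub, hsup⟩ := hT.exists_Ioc_subset_Ioc_inter_subset_Icc hab
  have hae : (Ioc a b ∩ T : Set ℝ) =ᵐ[volume] (Ioc c b : Set ℝ) :=
    (hsub.eventuallyLE.antisymm (hsup.eventuallyLE.trans Ioc_ae_eq_Icc.symm.le)).symm
  have hsplit : (∫ u in Ioc a c, h u) + ∫ u in Ioc c b, h u = ∫ u in Ioc a b, h u := by
    rw [← setIntegral_union (Ioc_disjoint_Ioc_of_le le_rfl) measurableSet_Ioc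
      (hh.mono_set (Ioc_subset_Ioc_right hcb)) (hh.mono_set (Ioc_subset_Ioc_left hac)),
      Ioc_union_Ioc_eq_Ioc hac hcb]
  rw [setIntegral_congr_set hae]
  linarith [hH c ⟨hac, hcb⟩]

theorem setIntegral_mul_nonpos_of_monotone {ψ : ℝ → ℝ} (hψ : Monotone ψ) :
    ∫ u in Ioc a b, h u * ψ u ≤ 0 := by
  set F : ℝ × ℝ → ℝ := {p | p.2 < ψ p.1}.indicator (fun p => h p.1)
  have hF : Integrable F ((volume.restrict (Ioc a b)).prod (volume.restrict (Ioc (ψ a) (ψ b)))) :=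
    (hh.comp_fst _).norm.mono' ((hh.aestronglyMeasurable.comp_fst).indicator
      (measurableSet_lt measurable_snd (hψ.measurable.comp measurable_fst)))
      (ae_of_all _ fun p => norm_indicator_le_norm_self _ _)
  -- layer-cake formula: `ψ u - ψ a` is the length of `{y ∈ (ψ a, ψ b] | y < ψ u}`
  have hlayer : ∀ u ∈ Ioc a b, ∫ y in Ioc (ψ a) (ψ b), F (u, y) = h u * (ψ u - ψ a) := by
    intro u hu
    have hFu : (fun y => F (u, y)) = (Iio (ψ u)).indicator (fun _ => h u) := by
      ext y; simp [F, indicator_apply]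
    have hIoo : Ioc (ψ a) (ψ b) ∩ Iio (ψ u) = Ioo (ψ a) (ψ u) := by
      have := hψ hu.2
      ext y; simp only [mem_inter_iff, mem_Ioc, mem_Iio, mem_Ioo]; grind
    rw [hFu, setIntegral_indicator measurableSet_Iio, hIoo, setIntegral_const,
      Real.volume_real_Ioo_of_le (hψ hu.1.le), smul_eq_mul, mul_comm]
  have hslice : ∀ y, ∫ u in Ioc a b, F (u, y) = ∫ u in Ioc a b ∩ ψ ⁻¹' Ioi y, h u := by
    intro y
    rw [← setIntegral_indicator ((isUpperSet_Ioi y).preimage hψ).ordConnected.measurableSet]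
    rfl
  have hhψ : IntegrableOn (fun u => h u * ψ u) (Ioc a b) :=
    hh.mul_bdd hψ.measurable.aestronglyMeasurable ((ae_restrict_iff' measurableSet_Ioc).2
      (ae_of_all _ fun u hu => abs_le_max_abs_abs (hψ hu.1.le) (hψ hu.2)))
  calc ∫ u in Ioc a b, h u * ψ u = ∫ u in Ioc a b, h u * (ψ u - ψ a) := by
        simp only [mul_sub, integral_sub hhψ (hh.mul_const _), integral_mul_const, hHb, zero_mul,
          sub_zero]
    _ = ∫ u in Ioc a b, ∫ y in Ioc (ψ a) (ψ b), F (u, y) :=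
        setIntegral_congr_fun measurableSet_Ioc fun u hu => (hlayer u hu).symm
    _ = ∫ y in Ioc (ψ a) (ψ b), ∫ u in Ioc a b, F (u, y) := integral_integral_swap hF
    _ ≤ 0 := integral_nonpos fun y => (hslice y).trans_le
        (setIntegral_inter_nonpos_of_isUpperSet hab hh hH hHb ((isUpperSet_Ioi y).preimage hψ))

theorem setIntegral_mul_nonpos_of_monotoneOn {φ : ℝ → ℝ}
    (hφ : MonotoneOn φ (Ioc a b ∩ support h)) (hhφ : IntegrableOn (fun u => h u * φ u) (Ioc a b)) :
    ∫ u in Ioc a b, h u * φ u ≤ 0 := by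
  have hext : ∀ K : ℕ, ∃ ψ : ℝ → ℝ,
      Monotone ψ ∧ EqOn (fun u => max (-(K : ℝ)) (min (φ u) K)) ψ (Ioc a b ∩ support h) := by
    intro K
    refine MonotoneOn.exists_monotone_extension ?_ ⟨-(K : ℝ), ?_⟩ ⟨(K : ℝ), ?_⟩
    · exact fun u hu v hv huv => max_le_max le_rfl (min_le_min_right _ (hφ hu hv huv))
    · rintro _ ⟨u, -, rfl⟩; exact le_max_left _ _
    · rintro _ ⟨u, -, rfl⟩; exact max_le (by simp) (min_le_right _ _)
  choose ψ hψ hψφ using hext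
  have heq : ∀ K : ℕ, ∀ u ∈ Ioc a b, h u * ψ K u = h u * max (-(K : ℝ)) (min (φ u) K) := by
    intro K u hu
    by_cases h0 : h u = 0
    · simp [h0]
    · rw [← hψφ K ⟨hu, h0⟩]
  have hlim : Tendsto (fun K : ℕ => ∫ u in Ioc a b, h u * ψ K u) atTop
      (nhds (∫ u in Ioc a b, h u * φ u)) := by
    refine tendsto_integral_of_dominated_convergence (fun u => ‖h u * φ u‖)
      (fun K => hh.aestronglyMeasurable.mul (hψ K).measurable.aestronglyMeasurable) hhφ.norm
      (fun K => ?_) ?_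
    · filter_upwards [ae_restrict_mem measurableSet_Ioc] with u hu
      rw [heq K u hu, norm_mul, norm_mul]
      gcongr
      simp only [Real.norm_eq_abs]
      grind [abs_le]
    · filter_upwards [ae_restrict_mem measurableSet_Ioc] with u hu
      refine tendsto_const_nhds.congr' ?_
      filter_upwards [eventually_ge_atTop ⌈|φ u|⌉₊] with K hK
      have hφK : |φ u| ≤ K := (Nat.le_ceil _).trans (Nat.cast_le.2 hK)
      rw [heq K u hu]
      grind [abs_le]
  exact le_of_tendsto' hlim fun K => setIntegral_mul_nonpos_of_monotone hab hh hH hHb (hψ K)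

end AbelSummation

theorem concave_majorization_comparison
    (f g ghat : ℝ → ℝ)
    (hf : ConcaveOn ℝ (Set.Icc (0:ℝ) 1) f)
    (hg : ∀ u ∈ Set.Icc (0:ℝ) 1, g u ∈ Set.Icc (0:ℝ) 1)
    (hghat : ∀ u ∈ Set.Icc (0:ℝ) 1, ghat u ∈ Set.Icc (0:ℝ) 1)
    (hgmono : AntitoneOn g (Set.Icc (0:ℝ) 1))
    (hghatmono : AntitoneOn ghat (Set.Icc (0:ℝ) 1))
    (htotal : ∫ u in (0:ℝ)..1, g u = ∫ u in (0:ℝ)..1, ghat u)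
    (hpartial : ∀ t ∈ Set.Icc (0:ℝ) 1,
      ∫ u in (0:ℝ)..t, ghat u ≤ ∫ u in (0:ℝ)..t, g u) :
    ∫ u in (0:ℝ)..1, f (g u) ≤ ∫ u in (0:ℝ)..1, f (ghat u) := by
  have h01 : uIcc (0:ℝ) 1 = Icc 0 1 := uIcc_of_le zero_le_one
  have h1 : (1:ℝ) ∈ Icc 0 1 := right_mem_Icc.2 zero_le_one
  have hint : ∀ t ∈ Icc (0:ℝ) 1,
      IntervalIntegrable g volume 0 t ∧ IntervalIntegrable ghat volume 0 t := fun t ht =>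
    ⟨(hgmono.mono (uIcc_subset_Icc (left_mem_Icc.2 zero_le_one) ht)).intervalIntegrable,
      (hghatmono.mono (uIcc_subset_Icc (left_mem_Icc.2 zero_le_one) ht)).intervalIntegrable⟩
  have hH : ∀ t ∈ Icc (0:ℝ) 1,
      ∫ u in Ioc 0 t, (g u - ghat u) = (∫ u in (0:ℝ)..t, g u) - ∫ u in (0:ℝ)..t, ghat u :=
    fun t ht => by
      rw [← intervalIntegral.integral_of_le ht.1,
        intervalIntegral.integral_sub (hint t ht).1 (hint t ht).2]
  have hslope :
      (fun u => (g u - ghat u) * slope f (ghat u) (g u)) = fun u => f (g u) - f (ghat u) :=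
    funext fun u => sub_smul_slope f (ghat u) (g u)
  have hfg : IntervalIntegrable (fun u => f (g u)) volume 0 1 :=
    hf.intervalIntegrable_comp_antitoneOn (h01 ▸ hgmono) (h01 ▸ hg)
  have hfghat : IntervalIntegrable (fun u => f (ghat u)) volume 0 1 :=
    hf.intervalIntegrable_comp_antitoneOn (h01 ▸ hghatmono) (h01 ▸ hghat)
  have habel := setIntegral_mul_nonpos_of_monotoneOn zero_le_one
    ((hint 1 h1).1.sub (hint 1 h1).2).1
    (fun t ht => by rw [hH t ht]; linarith [hpartial t ht])
    (by rw [hH 1 h1, htotal, sub_self])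
    ((hf.monotoneOn_slope_of_antitoneOn hgmono hghatmono hg hghat).mono
      (inter_subset_inter_left _ Ioc_subset_Icc_self))
    (hslope ▸ (hfg.sub hfghat).1)
  rw [hslope, ← intervalIntegral.integral_of_le zero_le_one,
    intervalIntegral.integral_sub hfg hfghat] at habel
  linarith
end

section
/- For the evolving set process of a finite Markov kernel P with stationary distribution π, for any subset A of the state space, ∫₀¹ π(A_u) du = π(A), where A_u = {y : Q(A,y) ≥ u·π(y)}. -/
open Finset

variable {V : Type*}

/-- Ergodic flow from a set `A` into a state `y`: `Q(A,y) = ∑_{x∈A} π(x) P(x,y)`. -/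
def ergFlow [Fintype V] (π : V → ℝ) (P : Matrix V V ℝ) (A : Finset V) (y : V) : ℝ :=
  ∑ x ∈ A, π x * P x y

/-- The evolving set `A_u = {y : Q(A,y) ≥ u π(y)}`. -/
noncomputable def evolSet [Fintype V] (π : V → ℝ) (P : Matrix V V ℝ) (A : Finset V) (u : ℝ) :
    Finset V :=
  Finset.univ.filter (fun y => u * π y ≤ ergFlow π P A y)

/-- Stationary mass of a set: `π(A)`. -/
def mass (π : V → ℝ) (A : Finset V) : ℝ := ∑ y ∈ A, π y

/-- Ergodic flow between sets: `Q(A,B)`. -/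
def ergFlowSet (π : V → ℝ) (P : Matrix V V ℝ) (A B : Finset V) : ℝ :=
  ∑ x ∈ A, ∑ y ∈ B, π x * P x y

/- Fubini over `[0,1] × V`: a state `y` lies in `A_u` exactly for `u ≤ Q(A,y)/π(y)`, a number in
`[0,1]`, so it contributes `π(y) · Q(A,y)/π(y) = Q(A,y)` to the integral; summing over `y`
spreads the mass `π(x)` of each `x ∈ A` along the rows `P(x,·)`, which sum to one. -/

theorem integral_ite_mul_le {p q : ℝ} (hp : 0 < p) (hq : 0 ≤ q) (hqp : q ≤ p) :
    ∫ u in (0:ℝ)..1, (if u * p ≤ q then p else 0) = q := by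
  have hstep : (fun u => if u * p ≤ q then p else 0) = {u | u ≤ q / p}.indicator fun _ => p := by
    ext u
    simp [Set.indicator_apply, le_div_iff₀ hp]
  rw [hstep, intervalIntegral.integral_indicator ⟨div_nonneg hq hp.le, (div_le_one hp).2 hqp⟩,
    intervalIntegral.integral_const, smul_eq_mul, sub_zero, div_mul_cancel₀ _ hp.ne']

theorem antitone_ite_mul_le {p q : ℝ} (hp : 0 ≤ p) :
    Antitone fun u : ℝ => if u * p ≤ q then p else 0 := by
  intro u v huv
  dsimp only
  split_ifs with hv hu hu
  · rfl
  · exact absurd ((mul_le_mul_of_nonneg_right huv hp).trans hv) hu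
  · exact hp
  · rfl

section EvolvingSet

variable [Fintype V] {π : V → ℝ} {P : Matrix V V ℝ}

theorem ergFlow_nonneg (hPnn : ∀ x y, 0 ≤ P x y) (hπ : ∀ x, 0 ≤ π x) (A : Finset V) (y : V) :
    0 ≤ ergFlow π P A y :=
  sum_nonneg fun x _ => mul_nonneg (hπ x) (hPnn x y)

theorem ergFlow_le (hPnn : ∀ x y, 0 ≤ P x y) (hπ : ∀ x, 0 ≤ π x)
    (hstat : ∀ y, ∑ x, π x * P x y = π y) (A : Finset V) (y : V) :
    ergFlow π P A y ≤ π y :=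
  hstat y ▸ sum_le_sum_of_subset_of_nonneg (subset_univ A) fun x _ _ => mul_nonneg (hπ x) (hPnn x y)

theorem sum_ergFlow (hProw : ∀ x, ∑ y, P x y = 1) (A : Finset V) :
    ∑ y, ergFlow π P A y = mass π A := by
  simp only [ergFlow, mass]
  rw [sum_comm]
  exact sum_congr rfl fun x _ => by rw [← mul_sum, hProw, mul_one]

theorem mass_evolSet (A : Finset V) (u : ℝ) :
    mass π (evolSet π P A u) = ∑ y, if u * π y ≤ ergFlow π P A y then π y else 0 :=
  sum_filter _ _

end EvolvingSet

theorem evolSet_martingale_general [Fintype V]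
    (π : V → ℝ) (P : Matrix V V ℝ)
    (hPnn : ∀ x y, 0 ≤ P x y) (hProw : ∀ x, ∑ y, P x y = 1)
    (hπpos : ∀ x, 0 < π x)
    (hstat : ∀ y, ∑ x, π x * P x y = π y)
    (A : Finset V) :
    ∫ u in (0:ℝ)..1, mass π (evolSet π P A u) = mass π A := by
  have hπ : ∀ x, 0 ≤ π x := fun x => (hπpos x).le
  calc ∫ u in (0:ℝ)..1, mass π (evolSet π P A u)
      = ∑ y, ∫ u in (0:ℝ)..1, (if u * π y ≤ ergFlow π P A y then π y else 0) := by
        simp_rw [mass_evolSet]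
        exact intervalIntegral.integral_finsetSum fun y _ =>
          (antitone_ite_mul_le (hπ y)).intervalIntegrable
    _ = ∑ y, ergFlow π P A y := sum_congr rfl fun y _ =>
        integral_ite_mul_le (hπpos y) (ergFlow_nonneg hPnn hπ A y) (ergFlow_le hPnn hπ hstat A y)
    _ = mass π A := sum_ergFlow hProw A

/-- Martingale identity for evolving sets: `∫₀¹ π(A_u) du = π(A)`. -/
theorem evolSet_martingale [Fintype V] [DecidableEq V]
    (π : V → ℝ) (P : Matrix V V ℝ)
    (hPnn : ∀ x y, 0 ≤ P x y) (hProw : ∀ x, ∑ y, P x y = 1)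
    (hπpos : ∀ x, 0 < π x) (hπsum : ∑ x, π x = 1)
    (hstat : ∀ y, ∑ x, π x * P x y = π y)
    (hirr : ∀ x y : V, ∃ n : ℕ, 0 < (P ^ n) x y)
    (A : Finset V) :
    ∫ u in (0:ℝ)..1, mass π (evolSet π P A u) = mass π A :=
  evolSet_martingale_general π P hPnn hProw hπpos hstat A
end

section
/- For h ≥ 0 and p ∈ [0,1] with h(1−p) ≤ 1 and hp ≤ 1, (1/2)(√(1+h(1−p))√(1−hp) + √(1−h(1−p))√(1+hp)) ≤ √(1 − h²/4). -/
theorem cheeger_algebraic_step (h p : ℝ) (hh : 0 ≤ h) (hp : p ∈ Set.Icc (0:ℝ) 1)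
    (hhp : h * p ≤ 1) (hhq : h * (1 - p) ≤ 1) :
    (1 / 2) * (Real.sqrt (1 + h * (1 - p)) * Real.sqrt (1 - h * p)
      + Real.sqrt (1 - h * (1 - p)) * Real.sqrt (1 + h * p))
      ≤ Real.sqrt (1 - h ^ 2 / 4) := by
  obtain ⟨hp0, hp1⟩ := hp
  have ha : 0 ≤ 1 + h * (1 - p) := by nlinarith
  have hb : 0 ≤ 1 - h * p := by linarith
  have hc : 0 ≤ 1 - h * (1 - p) := by linarith
  have hd : 0 ≤ 1 + h * p := by nlinarith
  set sa := Real.sqrt (1 + h * (1 - p)) with hsa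
  set sb := Real.sqrt (1 - h * p) with hsb
  set sc := Real.sqrt (1 - h * (1 - p)) with hsc
  set sd := Real.sqrt (1 + h * p) with hsd
  have ea : sa * sa = 1 + h * (1 - p) := Real.mul_self_sqrt ha
  have eb : sb * sb = 1 - h * p := Real.mul_self_sqrt hb
  have ec : sc * sc = 1 - h * (1 - p) := Real.mul_self_sqrt hc
  have ed : sd * sd = 1 + h * p := Real.mul_self_sqrt hd
  have na : 0 ≤ sa := Real.sqrt_nonneg _
  have nb : 0 ≤ sb := Real.sqrt_nonneg _
  have nc : 0 ≤ sc := Real.sqrt_nonneg _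
  have nd : 0 ≤ sd := Real.sqrt_nonneg _
  have h2 : h ≤ 2 := by nlinarith
  have hgoal : 0 ≤ 1 - h ^ 2 / 4 := by nlinarith
  have lhsnn : 0 ≤ (1 / 2) * (sa * sb + sc * sd) := by positivity
  have key : ((1 / 2) * (sa * sb + sc * sd)) ^ 2 ≤ 1 - h ^ 2 / 4 := by
    nlinarith [sq_nonneg (sa * sc - sb * sd), mul_nonneg (mul_nonneg na nb) (mul_nonneg nc nd),
      mul_self_nonneg (sa*sb - sc*sd)]
  calc (1 / 2) * (sa * sb + sc * sd)
      = Real.sqrt (((1 / 2) * (sa * sb + sc * sd)) ^ 2) := (Real.sqrt_sq lhsnn).symm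
    _ ≤ Real.sqrt (1 - h ^ 2 / 4) := Real.sqrt_le_sqrt key
end

section
/- For a lazy finite Markov kernel P with stationary distribution π and any A ⊆ V, a state x ∈ A belongs to the internal boundary ∂_in(A) = {x ∈ A : P(x,Aᶜ) > 0} if and only if x ∉ A_u for every u > 1 − P₀, where P₀ = min{P(x,y) : x ≠ y, P(x,y) > 0}. -/
open Finset

variable {V : Type*}

section

variable [Fintype V] (π : V → ℝ) (P : Matrix V V ℝ)

theorem ergFlow_eq_mul_sum (hrev : ∀ x y, π x * P x y = π y * P y x) (A : Finset V) (x : V) :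
    ergFlow π P A x = π x * ∑ y ∈ A, P x y := by
  rw [ergFlow, Finset.mul_sum]
  exact Finset.sum_congr rfl fun y _ => hrev y x

variable [DecidableEq V]

theorem sum_eq_one_sub_sum_compl (hProw : ∀ x, ∑ y, P x y = 1) (A : Finset V) (x : V) :
    ∑ y ∈ A, P x y = 1 - ∑ y ∈ Aᶜ, P x y := by
  rw [eq_sub_iff_add_eq, Finset.sum_add_sum_compl, hProw]

/-- Reversibility turns `Q(A,x)` into `π(x) P(x,A)`, so membership of `x` in `A_u` only
depends on the escape probability `P(x,Aᶜ)`. -/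
theorem mem_evolSet_iff (hProw : ∀ x, ∑ y, P x y = 1) (hrev : ∀ x y, π x * P x y = π y * P y x)
    {A : Finset V} {x : V} (hπx : 0 < π x) (u : ℝ) :
    x ∈ evolSet π P A u ↔ u ≤ 1 - ∑ y ∈ Aᶜ, P x y := by
  simp only [evolSet, Finset.mem_filter, Finset.mem_univ, true_and]
  rw [ergFlow_eq_mul_sum π P hrev, sum_eq_one_sub_sum_compl P hProw, mul_comm u]
  exact mul_le_mul_iff_of_pos_left hπx

theorem le_sum_compl_of_pos {P0 : ℝ} (hPnn : ∀ x y, 0 ≤ P x y)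
    (hP0 : P0 ∈ lowerBounds {p : ℝ | ∃ x y : V, x ≠ y ∧ 0 < P x y ∧ P x y = p})
    {A : Finset V} {x : V} (hx : x ∈ A) (hpos : 0 < ∑ y ∈ Aᶜ, P x y) :
    P0 ≤ ∑ y ∈ Aᶜ, P x y := by
  obtain ⟨y, hyA, hy⟩ := (Finset.sum_pos_iff_of_nonneg fun z _ => hPnn x z).mp hpos
  have hxy : x ≠ y := by rintro rfl; exact Finset.mem_compl.mp hyA hx
  calc P0 ≤ P x y := hP0 ⟨x, y, hxy, hy, rfl⟩
    _ ≤ ∑ y ∈ Aᶜ, P x y := Finset.single_le_sum (fun z _ => hPnn x z) hyA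

end

theorem internal_boundary_evolSet_general [Fintype V] [DecidableEq V]
    (π : V → ℝ) (P : Matrix V V ℝ)
    (hPnn : ∀ x y, 0 ≤ P x y) (hProw : ∀ x, ∑ y, P x y = 1)
    (hπpos : ∀ x, 0 < π x)
    (hrev : ∀ x y, π x * P x y = π y * P y x)
    (P0 : ℝ)
    (hP0 : IsLeast {p : ℝ | ∃ x y : V, x ≠ y ∧ 0 < P x y ∧ P x y = p} P0)
    (A : Finset V) (x : V) (hx : x ∈ A) :
    (0 < ∑ y ∈ Aᶜ, P x y) ↔ ∀ u : ℝ, 1 - P0 < u → x ∉ evolSet π P A u := by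
  simp only [mem_evolSet_iff π P hProw hrev (hπpos x), not_le]
  constructor
  · intro hpos u hu
    linarith [le_sum_compl_of_pos P hPnn hP0.2 hx hpos]
  · intro h
    obtain ⟨⟨a, b, -, hab, rfl⟩, -⟩ := hP0
    -- `P₀ > 0`, so if `P(x,Aᶜ) ≤ 0` the level `u = 1 - P(x,Aᶜ)` lies above `1 - P₀`.
    by_contra! hS
    exact lt_irrefl _ (h _ (by linarith : 1 - P a b < 1 - ∑ y ∈ Aᶜ, P x y))

/-- Membership in the internal boundary is characterized by exclusion from `A_u`
for all `u > 1 - P₀`. -/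
theorem internal_boundary_evolSet [Fintype V] [DecidableEq V]
    (π : V → ℝ) (P : Matrix V V ℝ)
    (hPnn : ∀ x y, 0 ≤ P x y) (hProw : ∀ x, ∑ y, P x y = 1)
    (hπpos : ∀ x, 0 < π x) (hπsum : ∑ x, π x = 1)
    (hstat : ∀ y, ∑ x, π x * P x y = π y)
    (hrev : ∀ x y, π x * P x y = π y * P y x)
    (hlazy : ∀ x, (1:ℝ)/2 ≤ P x x)
    (P0 : ℝ)
    (hP0 : IsLeast {p : ℝ | ∃ x y : V, x ≠ y ∧ 0 < P x y ∧ P x y = p} P0)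
    (A : Finset V) (x : V) (hx : x ∈ A) :
    (0 < ∑ y ∈ Aᶜ, P x y) ↔ ∀ u : ℝ, 1 - P0 < u → x ∉ evolSet π P A u :=
  internal_boundary_evolSet_general π P hPnn hProw hπpos hrev P0 hP0 A x hx
end

section
/- For h ∈ [0,1] and P₀ ∈ (0,1] with hP₀ ≤ 1, 1 − √(1+hP₀) + P₀(1 − √(1−h)) ≥ (P₀/8)h². -/
theorem vertex_expansion_in_simplification (h P0 : ℝ)
    (hh : h ∈ Set.Icc (0:ℝ) 1) (hP0 : P0 ∈ Set.Ioc (0:ℝ) 1) :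
    P0 / 8 * h ^ 2 ≤ 1 - Real.sqrt (1 + h * P0) + P0 * (1 - Real.sqrt (1 - h)) := by
  obtain ⟨h0, h1⟩ := hh
  obtain ⟨p0, p1⟩ := hP0
  have hb1 : Real.sqrt (1 + h * P0) ≤ 1 + h * P0 / 2 := by
    calc Real.sqrt (1 + h * P0) ≤ Real.sqrt ((1 + h * P0 / 2) ^ 2) := by
          apply Real.sqrt_le_sqrt; nlinarith [sq_nonneg (h*P0)]
      _ = 1 + h * P0 / 2 := Real.sqrt_sq (by nlinarith)
  have hb2 : Real.sqrt (1 - h) ≤ 1 - h / 2 - h ^ 2 / 8 := by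
    calc Real.sqrt (1 - h) ≤ Real.sqrt ((1 - h / 2 - h ^ 2 / 8) ^ 2) := by
          apply Real.sqrt_le_sqrt; nlinarith [sq_nonneg h, sq_nonneg (h^2)]
      _ = 1 - h / 2 - h ^ 2 / 8 := Real.sqrt_sq (by nlinarith)
  nlinarith [mul_le_mul_of_nonneg_left hb2 p0.le]
end

section
/- For h ≥ 0 and P₀ ∈ (0,1] with hP₀ ≤ 1: 1 − √(1 − hP₀) − P₀(√(1+h) − 1) ≥ (P₀/12)·min{h², h}. -/
theorem vertex_expansion_out_simplification (h P0 : ℝ)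
    (hh : 0 ≤ h) (hP0 : P0 ∈ Set.Ioc (0:ℝ) 1) (hhP0 : h * P0 ≤ 1) :
    P0 / 12 * min (h ^ 2) h ≤ 1 - Real.sqrt (1 - h * P0) - P0 * (Real.sqrt (1 + h) - 1) := by
  obtain ⟨hP1, hP2⟩ := hP0
  set s := Real.sqrt (1 - h * P0) with hsdef
  set t := Real.sqrt (1 + h) with htdef
  have hs0 : 0 ≤ s := Real.sqrt_nonneg _
  have ht0 : 0 ≤ t := Real.sqrt_nonneg _
  have hs2 : s ^ 2 = 1 - h * P0 := Real.sq_sqrt (by linarith)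
  have ht2 : t ^ 2 = 1 + h := Real.sq_sqrt (by linarith)
  have hs1 : s ≤ 1 := by nlinarith [mul_nonneg hh hP1.le]
  have ht1 : 1 ≤ t := by nlinarith
  have e1 : (1 - s) * (1 + s) = h * P0 := by linear_combination -hs2
  have e2 : (t - 1) * (t + 1) = h := by linear_combination ht2
  have hD : 0 < (1 + s) * (1 + t) * (t + s) :=
    mul_pos (mul_pos (by linarith) (by linarith)) (by linarith)
  have key : (1 - s - P0 * (t - 1)) * ((1 + s) * (1 + t) * (t + s))
      = h ^ 2 * P0 * (1 + P0) := by
    linear_combination (1 + t) * (t + s) * e1 - P0 * (1 + s) * (t + s) * e2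
      + h * P0 * ht2 - h * P0 * hs2
  refine le_of_mul_le_mul_right ?_ hD
  rw [key]
  rcases le_total h 1 with hc | hc
  · rw [min_eq_left (by nlinarith)]
    have ht32 : t ≤ 17 / 12 := by nlinarith [sq_nonneg (t - 3 / 2)]
    have hDle : (1 + s) * (1 + t) * (t + s) ≤ 12 := by nlinarith
    nlinarith [mul_le_mul_of_nonneg_left hDle
        (by positivity : (0:ℝ) ≤ P0 / 12 * h ^ 2),
      mul_nonneg (mul_nonneg hP1.le (sq_nonneg h)) hP1.le]
  · rw [min_eq_right (by nlinarith)]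
    have ht5 : 2 * t ≤ 5 * h - 2 := by
      nlinarith [sq_nonneg (2 * t - (5 * h - 2)), mul_nonneg hh hh]
    have hDle : (1 + s) * (1 + t) * (t + s) ≤ 12 * h := by nlinarith
    nlinarith [mul_le_mul_of_nonneg_left hDle
        (by positivity : (0:ℝ) ≤ P0 / 12 * h),
      mul_nonneg (mul_nonneg hP1.le (sq_nonneg h)) hP1.le]
end

section
/- For h ∈ [0,2] and P₀ ∈ (0,1]: 1 − √(1 − (hP₀/2)²) − P₀(√(1 − (h/2)²) − 1) ≥ (P₀(1+P₀)/8)·h². -/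
lemma sqrt_one_sub_le (x : ℝ) (hx0 : 0 ≤ x) (hx1 : x ≤ 1) :
    Real.sqrt (1 - x) ≤ 1 - x / 2 := by
  have h1 : (1 : ℝ) - x ≤ (1 - x / 2) ^ 2 := by nlinarith
  calc Real.sqrt (1 - x) ≤ Real.sqrt ((1 - x / 2) ^ 2) := Real.sqrt_le_sqrt h1
    _ = 1 - x / 2 := by rw [Real.sqrt_sq (by linarith)]

theorem vertex_expansion_sym_simplification (h P0 : ℝ)
    (hh : h ∈ Set.Icc (0:ℝ) 2) (hP0 : P0 ∈ Set.Ioc (0:ℝ) 1) :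
    P0 * (1 + P0) / 8 * h ^ 2 ≤
      1 - Real.sqrt (1 - (h * P0 / 2) ^ 2) - P0 * (Real.sqrt (1 - (h / 2) ^ 2) - 1) := by
  obtain ⟨h0, h2⟩ := hh
  obtain ⟨P0pos, P1⟩ := hP0
  have hhp : h * P0 ≤ 2 := by nlinarith
  have hhp0 : 0 ≤ h * P0 := mul_nonneg h0 P0pos.le
  have ha : Real.sqrt (1 - (h * P0 / 2) ^ 2) ≤ 1 - (h * P0 / 2) ^ 2 / 2 :=
    sqrt_one_sub_le _ (by positivity) (by nlinarith [sq_nonneg (h*P0)]) 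
  have hb : Real.sqrt (1 - (h / 2) ^ 2) ≤ 1 - (h / 2) ^ 2 / 2 :=
    sqrt_one_sub_le _ (by positivity) (by nlinarith)
  nlinarith [mul_le_mul_of_nonneg_left hb (le_of_lt P0pos)]
end
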